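/- arXiv:1405.6278 — 2 statements merged into one kernel-verified Lean document; each statement's English description precedes it below -/
import Mathlib

section
/- Let S be a nonempty semigroup such that S \ E(S) is finite, and let T be an S-valued sequence of length |S \ E(S)| with Π(T) ∩ E(S) = ∅. Then Π(T) = S \ E(S). -/
/-- Product, in order, of the nonempty list `a :: l` in a semigroup. -/
def sprod {S : Type*} [Mul S] (a : S) (l : List S) : S := l.foldl (· * ·) a

/-- `pow1 x n = x^(n+1)`: the `(n+1)`-st power of `x` in a semigroup. -/
def pow1 {S : Type*} [Mul S] (x : S) : ℕ → S := fun n => Nat.rec x (fun _ y => y * x) n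

/-- `Π(T)`: the set of products, in order, of nonempty lists which are
permutations of order-preserving sublists of `T`. -/
def PiSet {S : Type*} [Mul S] (T : List S) : Set S :=
  {s | ∃ u : List S, u.Sublist T ∧ ∃ a l, (a :: l).Perm u ∧ sprod a l = s}

/-- `A(L)`: the set of products, in order, of nonempty order-preserving sublists of `L`. -/
def ASet {S : Type*} [Mul S] (L : List S) : Set S :=
  {s | ∃ a l, (a :: l).Sublist L ∧ sprod a l = s}

/-- `HasIndexPeriod x r p` says that `r` is the index of `x` (the least `r > 0` such
that `x^r = x^t` for some positive `t ≠ r`) and `p` is the period of `x` (the least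
`p > 0` with `x^(r+p) = x^r`). Powers are expressed via `pow1 x (n-1) = x^n`. -/
def HasIndexPeriod {S : Type*} [Mul S] (x : S) (r p : ℕ) : Prop :=
  (0 < r ∧ (∃ t, 0 < t ∧ t ≠ r ∧ pow1 x (t - 1) = pow1 x (r - 1)) ∧
    ∀ r', 0 < r' → (∃ t, 0 < t ∧ t ≠ r' ∧ pow1 x (t - 1) = pow1 x (r' - 1)) → r ≤ r') ∧
  (0 < p ∧ pow1 x (r + p - 1) = pow1 x (r - 1) ∧
    ∀ p', 0 < p' → pow1 x (r + p' - 1) = pow1 x (r - 1) → p ≤ p')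

/-!
Appending a term `t` to a sequence `L` strictly enlarges `Π(L)` as long as no product is
idempotent: otherwise `t ∈ Π(L)` and `Π(L) · t ⊆ Π(L)`, so every power of `t` lies in the finite
set `Π(L)`, and a finite semigroup of powers contains an idempotent. Hence `|Π(T)| ≥ |T|`, while
idempotent-freeness gives `Π(T) ⊆ S \ E(S)`, a set of size `|T|`.
-/

section Semigroup

variable {S : Type*} [Semigroup S]

lemma sprod_concat (a : S) (l : List S) (t : S) : sprod a (l ++ [t]) = sprod a l * t := by
  simp [sprod]

lemma PiSet_mono {L₁ L₂ : List S} (h : L₁.Sublist L₂) : PiSet L₁ ⊆ PiSet L₂ := by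
  rintro s ⟨u, hu, a, l, hperm, hprod⟩
  exact ⟨u, hu.trans h, a, l, hperm, hprod⟩

lemma mem_PiSet_concat_self (L : List S) (t : S) : t ∈ PiSet (L ++ [t]) :=
  ⟨[t], List.singleton_sublist.mpr (by simp), t, [], .refl _, rfl⟩

lemma mul_mem_PiSet_concat {L : List S} {s : S} (hs : s ∈ PiSet L) (t : S) :
    s * t ∈ PiSet (L ++ [t]) := by
  obtain ⟨u, hu, a, l, hperm, rfl⟩ := hs
  exact ⟨u ++ [t], hu.append (.refl [t]), a, l ++ [t], hperm.append_right [t], sprod_concat a l t⟩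

lemma pow1_mul (t : S) (m n : ℕ) : pow1 t m * pow1 t n = pow1 t (m + n + 1) := by
  induction n with
  | zero => rfl
  | succ n ih =>
    change pow1 t m * (pow1 t n * t) = pow1 t (m + n + 1) * t
    rw [← mul_assoc, ih]

lemma exists_idempotent_of_finite_of_mul_mem {s : Set S} (hne : s.Nonempty) (hfin : s.Finite)
    (hmul : ∀ x ∈ s, ∀ y ∈ s, x * y ∈ s) : ∃ e ∈ s, e * e = e := by
  -- Ellis's theorem for the discrete topology.
  let : TopologicalSpace S := ⊥
  have : DiscreteTopology S := ⟨rfl⟩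
  exact exists_idempotent_in_compact_subsemigroup (fun _ => continuous_of_discreteTopology) s hne
    hfin.isCompact hmul

/-- The powers of `t` form a finite subsemigroup of `P`. -/
lemma exists_idempotent_of_finite_of_mul_right_mem {P : Set S} (hfin : P.Finite) {t : S}
    (ht : t ∈ P) (hmul : ∀ x ∈ P, x * t ∈ P) : ∃ e ∈ P, e * e = e := by
  have hpow : ∀ k, pow1 t k ∈ P := fun k => by
    induction k with
    | zero => exact ht
    | succ k ih => exact hmul _ ih
  obtain ⟨_, ⟨m, rfl⟩, he⟩ := exists_idempotent_of_finite_of_mul_mem (Set.range_nonempty (pow1 t))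
    (hfin.subset (Set.range_subset_iff.mpr hpow))
    (by rintro _ ⟨m, rfl⟩ _ ⟨n, rfl⟩; exact ⟨m + n + 1, (pow1_mul t m n).symm⟩)
  exact ⟨pow1 t m, hpow m, he⟩

lemma PiSet_ssubset_concat {L : List S} {t : S} (hfin : (PiSet (L ++ [t])).Finite)
    (hfree : ∀ s ∈ PiSet (L ++ [t]), s * s ≠ s) : PiSet L ⊂ PiSet (L ++ [t]) := by
  have hsub : PiSet L ⊆ PiSet (L ++ [t]) := PiSet_mono (List.sublist_append_left L [t])
  refine hsub.ssubset_of_ne fun heq => ?_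
  obtain ⟨e, he, hidem⟩ := exists_idempotent_of_finite_of_mul_right_mem hfin
    (mem_PiSet_concat_self L t) (fun x hx => mul_mem_PiSet_concat (heq ▸ hx) t)
  exact hfree e he hidem

lemma length_le_ncard_PiSet {L : List S} (hfin : (PiSet L).Finite)
    (hfree : ∀ s ∈ PiSet L, s * s ≠ s) : L.length ≤ (PiSet L).ncard := by
  induction L using List.reverseRecOn with
  | nil => exact Nat.zero_le _
  | append_singleton L t ih =>
    have hsub := PiSet_mono (List.sublist_append_left L [t])
    have hlt := Set.ncard_lt_ncard (PiSet_ssubset_concat hfin hfree) hfin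
    have hle := ih (hfin.subset hsub) (fun s hs => hfree s (hsub hs))
    simp only [List.length_append, List.length_singleton]
    omega

end Semigroup

theorem stmt_5_general {S : Type*} [Semigroup S]
    (hfin : {x : S | x * x ≠ x}.Finite)
    (T : List S) (hlen : T.length = {x : S | x * x ≠ x}.ncard)
    (hfree : PiSet T ∩ {e : S | e * e = e} = ∅) :
    PiSet T = {x : S | x * x ≠ x} := by
  have hsub : PiSet T ⊆ {x : S | x * x ≠ x} := fun s hs hidem =>
    (Set.eq_empty_iff_forall_notMem.mp hfree) s ⟨hs, hidem⟩
  have hle := length_le_ncard_PiSet (hfin.subset hsub) hsub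
  exact Set.eq_of_subset_of_ncard_le hsub (hlen ▸ hle) hfin

/-- An idempotent-product free sequence of the maximal length `|S \ E(S)|`
realizes every non-idempotent as a product: `Π(T) = S \ E(S)`. -/
theorem stmt_5 {S : Type*} [Semigroup S] [Nonempty S]
    (hfin : {x : S | x * x ≠ x}.Finite)
    (T : List S) (hlen : T.length = {x : S | x * x ≠ x}.ncard)
    (hfree : PiSet T ∩ {e : S | e * e = e} = ∅) :
    PiSet T = {x : S | x * x ≠ x} :=
  stmt_5_general hfin T hlen hfree
end

section
/- Let S be a nonempty semigroup such that S \ E(S) is finite, and let T be an S-valued sequence of length |S \ E(S)| with Π(T) ∩ E(S) = ∅. Then for every a ∈ supp(T), the cyclic subsemigroup ⟨a⟩ is finite, v_a(T) = I(a) + P(a) − 2, and I(a) ≡ 1 (mod P(a)), where I(a) and P(a) are the index and period of a. -/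
lemma List.Subperm.induction_down {α : Type*} {T : List α} {P : List α → Prop}
    (top : ∀ l, l.Perm T → P l) (cons : ∀ b l, (b :: l).Subperm T → P (b :: l) → P l)
    {l : List α} (hl : l.Subperm T) : P l := by
  by_cases h : l.length < T.length
  · obtain ⟨b, hb⟩ := hl.exists_of_length_lt h
    exact cons b l hb (induction_down top cons hb)
  · exact top l (hl.perm_of_length_le (not_lt.1 h))
termination_by T.length - l.length
decreasing_by have := hb.length_le; simp only [List.length_cons] at this ⊢; omega

section

variable {S : Type*} [Semigroup S]

@[simp] lemma pow1_zero (x : S) : pow1 x 0 = x := rfl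

lemma pow1_succ (x : S) (n : ℕ) : pow1 x (n + 1) = pow1 x n * x := rfl

lemma pow1_add (x : S) (i j : ℕ) : pow1 x (i + j + 1) = pow1 x i * pow1 x j := by
  induction j with
  | zero => rfl
  | succ j ih => rw [← add_assoc, pow1_succ, ih, pow1_succ, mul_assoc]

lemma pow1_succ' (x : S) (n : ℕ) : pow1 x (n + 1) = x * pow1 x n := by
  simpa using pow1_add x 0 n

lemma pow1_pow1 (x : S) (i j : ℕ) : pow1 (pow1 x i) j = pow1 x (i * j + i + j) := by
  induction j with
  | zero => simp
  | succ j ih =>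
    rw [pow1_succ, ih, ← pow1_add]
    congr 1
    ring

lemma IsIdempotentElem.pow1_eq {e : S} (he : IsIdempotentElem e) (n : ℕ) : pow1 e n = e := by
  induction n with
  | zero => rfl
  | succ n ih => rw [pow1_succ, ih, he.eq]

lemma pow1_eq_of_isIdempotentElem {x : S} {i j : ℕ} (hi : IsIdempotentElem (pow1 x i))
    (hj : IsIdempotentElem (pow1 x j)) : pow1 x i = pow1 x j := by
  rw [← hi.pow1_eq j, ← hj.pow1_eq i, pow1_pow1, pow1_pow1]
  congr 1
  ring

section Collision

variable {x : S} {i d : ℕ}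

lemma pow1_add_of_eq (h : pow1 x (i + d) = pow1 x i) {n : ℕ} (hn : i ≤ n) :
    pow1 x (n + d) = pow1 x n := by
  obtain ⟨k, rfl⟩ := Nat.exists_eq_add_of_le hn
  cases k with
  | zero => exact h
  | succ k => rw [show i + (k + 1) + d = i + d + k + 1 by ring, pow1_add, h, ← pow1_add]; rfl

lemma pow1_add_mul_of_eq (h : pow1 x (i + d) = pow1 x i) {n : ℕ} (hn : i ≤ n) (t : ℕ) :
    pow1 x (n + t * d) = pow1 x n := by
  induction t with
  | zero => simp
  | succ t ih => rw [add_mul, one_mul, ← add_assoc, pow1_add_of_eq h (by omega), ih]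

lemma isIdempotentElem_pow1_of_eq (h : pow1 x (i + d) = pow1 x i) {n : ℕ} (hn : i ≤ n)
    (hdvd : d ∣ n + 1) : IsIdempotentElem (pow1 x n) := by
  obtain ⟨t, ht⟩ := hdvd
  rw [IsIdempotentElem, ← pow1_add, add_assoc, ht, mul_comm, pow1_add_mul_of_eq h hn]

lemma exists_isIdempotentElem_pow1_of_eq (hd : 0 < d) (h : pow1 x (i + d) = pow1 x i) :
    ∃ n, IsIdempotentElem (pow1 x n) := by
  have : i + 1 ≤ (i + 1) * d := Nat.le_mul_of_pos_right _ hd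
  exact ⟨(i + 1) * d - 1, isIdempotentElem_pow1_of_eq h (by omega)
    ⟨i + 1, by rw [Nat.sub_add_cancel (by omega), mul_comm]⟩⟩

lemma exists_lt_pow1_eq_of_eq (hd : 0 < d) (h : pow1 x (i + d) = pow1 x i) (n : ℕ) :
    ∃ m < i + d, pow1 x n = pow1 x m := by
  induction n using Nat.strong_induction_on with
  | _ n ih =>
    by_cases hn : n < i + d
    · exact ⟨n, hn, rfl⟩
    · obtain ⟨m, hm, he⟩ := ih (n - d) (by omega)
      refine ⟨m, hm, ?_⟩
      rw [← he, ← pow1_add_of_eq h (by omega : i ≤ n - d), Nat.sub_add_cancel (by omega)]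

lemma finite_range_pow1_of_eq (hd : 0 < d) (h : pow1 x (i + d) = pow1 x i) :
    (Set.range (pow1 x)).Finite := by
  refine ((Set.finite_lt_nat (i + d)).image (pow1 x)).subset ?_
  rintro _ ⟨n, rfl⟩
  obtain ⟨m, hm, he⟩ := exists_lt_pow1_eq_of_eq hd h n
  exact ⟨m, hm, he.symm⟩

lemma exists_pow1_eq_of_finite (h : (Set.range (pow1 x)).Finite) :
    ∃ i d, 0 < d ∧ pow1 x (i + d) = pow1 x i := by
  obtain ⟨i, j, hij, he⟩ := h.exists_lt_map_eq_of_forall_mem (Set.mem_range_self (f := pow1 x))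
  exact ⟨i, j - i, by omega, by rw [Nat.add_sub_cancel' hij.le, he]⟩

end Collision

lemma finite_range_pow1 (hfin : {x : S | x * x ≠ x}.Finite) (x : S) :
    (Set.range (pow1 x)).Finite := by
  by_cases h : ∀ n, ¬IsIdempotentElem (pow1 x n)
  · exact hfin.subset (Set.range_subset_iff.2 h)
  · obtain ⟨n, hn⟩ := not_forall_not.1 h
    refine finite_range_pow1_of_eq (i := n) (d := n + 1) (by omega) ?_
    rw [← add_assoc, pow1_add, hn.eq]

lemma exists_mul_notMem {F : Finset S} (hF : ∀ y ∈ F, ¬IsIdempotentElem y) {b : S} (hb : b ∈ F) :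
    ∃ z ∈ F, b * z ∉ F := by
  by_contra! hclosed
  have hpow : ∀ n, pow1 b n ∈ F := by
    intro n
    induction n with
    | zero => exact hb
    | succ n ih => rw [pow1_succ']; exact hclosed _ ih
  obtain ⟨i, d, hd, h⟩ :=
    exists_pow1_eq_of_finite (F.finite_toSet.subset (Set.range_subset_iff.2 hpow))
  obtain ⟨n, hn⟩ := exists_isIdempotentElem_pow1_of_eq hd h
  exact hF _ (hpow n) hn

section IndexPeriod

variable {x : S}

lemma hasIndexPeriod_succ_iff {r p : ℕ} : HasIndexPeriod x (r + 1) p ↔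
    ((∃ t ≠ r, pow1 x t = pow1 x r) ∧ ∀ m, (∃ t ≠ m, pow1 x t = pow1 x m) → r ≤ m) ∧
    (0 < p ∧ pow1 x (r + p) = pow1 x r ∧
      ∀ q, 0 < q → pow1 x (r + q) = pow1 x r → p ≤ q) := by
  have hsub : ∀ q, r + 1 + q - 1 = r + q := by omega
  simp only [HasIndexPeriod, hsub, Nat.add_sub_cancel, Nat.succ_pos, true_and]
  refine and_congr (and_congr ⟨fun ⟨t, ht0, htr, he⟩ => ⟨t - 1, by omega, he⟩,
    fun ⟨t, htr, he⟩ => ⟨t + 1, by omega, by omega, he⟩⟩ ⟨fun hmin m ⟨t, htm, he⟩ => ?_,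
    fun hmin m hm ⟨t, ht0, htm, he⟩ => ?_⟩) Iff.rfl
  · have := hmin (m + 1) (by omega) ⟨t + 1, by omega, by omega, he⟩
    omega
  · have := hmin (m - 1) ⟨t - 1, by omega, he⟩
    omega

lemma exists_hasIndexPeriod {i d : ℕ} (hd : 0 < d) (h : pow1 x (i + d) = pow1 x i) :
    ∃ r p, HasIndexPeriod x (r + 1) p := by
  classical
  have hQ : ∃ m, ∃ t ≠ m, pow1 x t = pow1 x m := ⟨i, i + d, by omega, h⟩
  obtain ⟨t, htr, ht⟩ := Nat.find_spec hQ
  have hrt : Nat.find hQ < t := (Nat.find_min' hQ ⟨_, Ne.symm htr, ht.symm⟩).lt_of_ne' htr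
  have hP : ∃ q, 0 < q ∧ pow1 x (Nat.find hQ + q) = pow1 x (Nat.find hQ) :=
    ⟨t - Nat.find hQ, by omega, by rwa [Nat.add_sub_cancel' hrt.le]⟩
  exact ⟨Nat.find hQ, Nat.find hP, hasIndexPeriod_succ_iff.2
    ⟨⟨⟨t, htr, ht⟩, fun m hm => Nat.find_min' hQ hm⟩,
      (Nat.find_spec hP).1, (Nat.find_spec hP).2, fun q hq he => Nat.find_min' hP ⟨hq, he⟩⟩⟩

namespace HasIndexPeriod

variable {r p : ℕ}

lemma le_of_pow1_eq (hx : HasIndexPeriod x (r + 1) p) {t m : ℕ} (hne : t ≠ m)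
    (h : pow1 x t = pow1 x m) : r ≤ m :=
  (hasIndexPeriod_succ_iff.1 hx).1.2 m ⟨t, hne, h⟩

lemma period_pos (hx : HasIndexPeriod x (r + 1) p) : 0 < p :=
  (hasIndexPeriod_succ_iff.1 hx).2.1

lemma pow1_add_period (hx : HasIndexPeriod x (r + 1) p) : pow1 x (r + p) = pow1 x r :=
  (hasIndexPeriod_succ_iff.1 hx).2.2.1

lemma period_le (hx : HasIndexPeriod x (r + 1) p) {q : ℕ} (hq : 0 < q)
    (h : pow1 x (r + q) = pow1 x r) : p ≤ q :=
  (hasIndexPeriod_succ_iff.1 hx).2.2.2 q hq h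

lemma dvd_of_pow1_eq (hx : HasIndexPeriod x (r + 1) p) {m j : ℕ}
    (h : pow1 x (m + j) = pow1 x m) : p ∣ j := by
  have hper : ∀ {n}, r ≤ n → ∀ t, pow1 x (n + t * p) = pow1 x n :=
    pow1_add_mul_of_eq hx.pow1_add_period
  have hmp : m ≤ r + m * p := le_add_left (Nat.le_mul_of_pos_right m hx.period_pos)
  have hr : pow1 x (r + j) = pow1 x r :=
    calc pow1 x (r + j) = pow1 x (r + m * p + j) := by
          rw [add_right_comm, hper (by omega) m]
      _ = pow1 x (r + m * p) := pow1_add_of_eq h hmp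
      _ = pow1 x r := hper le_rfl m
  have hmod : pow1 x (r + j % p) = pow1 x r := by
    rw [← hper (n := r + j % p) (by omega) (j / p), add_assoc, Nat.mod_add_div', hr]
  by_contra hndvd
  have := hx.period_le (Nat.pos_of_ne_zero (mt Nat.dvd_of_mod_eq_zero hndvd)) hmod
  exact absurd (Nat.mod_lt j hx.period_pos) (by omega)

lemma injOn (hx : HasIndexPeriod x (r + 1) p) : Set.InjOn (pow1 x) (Set.Iio (r + p)) := by
  suffices ∀ i j, i < j → j < r + p → pow1 x i ≠ pow1 x j by
    intro i hi j hj he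
    by_contra hne
    rcases Nat.lt_or_gt_of_ne hne with h | h
    exacts [this i j h hj he, this j i h hi he.symm]
  intro i j hij hj he
  have hri : r ≤ i := hx.le_of_pow1_eq hij.ne' he.symm
  have hdvd : p ∣ j - i := hx.dvd_of_pow1_eq (by rw [Nat.add_sub_cancel' hij.le, he])
  have := Nat.le_of_dvd (by omega) hdvd
  omega

lemma dvd_succ_of_isIdempotentElem (hx : HasIndexPeriod x (r + 1) p) {n : ℕ}
    (h : IsIdempotentElem (pow1 x n)) : p ∣ n + 1 :=
  hx.dvd_of_pow1_eq (by rw [← add_assoc, pow1_add, h.eq])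

lemma exists_lt_isIdempotentElem (hx : HasIndexPeriod x (r + 1) p) :
    ∃ m < r + p, IsIdempotentElem (pow1 x m) := by
  obtain ⟨n, hn⟩ := exists_isIdempotentElem_pow1_of_eq hx.period_pos hx.pow1_add_period
  obtain ⟨m, hm, he⟩ := exists_lt_pow1_eq_of_eq hx.period_pos hx.pow1_add_period n
  exact ⟨m, hm, he ▸ hn⟩

end HasIndexPeriod

end IndexPeriod

lemma sprod_cons (a b : S) (l : List S) : sprod a (b :: l) = sprod (a * b) l := rfl

lemma sprod_append (a : S) (l m : List S) : sprod a (l ++ m) = sprod (sprod a l) m :=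
  List.foldl_append ..

lemma mul_sprod (x a : S) (l : List S) : x * sprod a l = sprod (x * a) l := by
  induction l generalizing a with
  | nil => rfl
  | cons b t ih => rw [sprod_cons, sprod_cons, ih, mul_assoc]

lemma sprod_replicate (a : S) (n : ℕ) : sprod a (List.replicate n a) = pow1 a n := by
  induction n with
  | zero => rfl
  | succ n ih => rw [List.replicate_succ', sprod_append, ih]; rfl

lemma aSet_subset_piSet {l T : List S} (h : l.Subperm T) : ASet l ⊆ PiSet T := by
  rintro s ⟨a, m, hsub, rfl⟩
  obtain ⟨u, hu, huT⟩ := hsub.subperm.trans h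
  exact ⟨u, huT, a, m, hu.symm, rfl⟩

lemma mul_mem_aSet_append {l : List S} {y : S} (hy : y ∈ ASet l) (c : S) :
    y * c ∈ ASet (l ++ [c]) := by
  obtain ⟨a, m, hsub, rfl⟩ := hy
  exact ⟨a, m ++ [c], hsub.append (List.Sublist.refl [c]), sprod_append a m [c]⟩

section SublistProducts

variable [DecidableEq S]

def sublistProds : List S → Finset S
  | [] => ∅
  | x :: l => insert x (sublistProds l ∪ (sublistProds l).image (x * ·))

lemma mem_sublistProds {s : S} {l : List S} : s ∈ sublistProds l ↔ s ∈ ASet l := by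
  induction l generalizing s with
  | nil => simp [sublistProds, ASet]
  | cons x t ih =>
    simp only [sublistProds, Finset.mem_insert, Finset.mem_union, Finset.mem_image, ih]
    constructor
    · rintro (rfl | ⟨a, m, hsub, rfl⟩ | ⟨y, ⟨a, m, hsub, rfl⟩, rfl⟩)
      · exact ⟨s, [], by simp, rfl⟩
      · exact ⟨a, m, hsub.trans (List.sublist_cons_self x t), rfl⟩
      · exact ⟨x, a :: m, hsub.cons_cons x, by rw [sprod_cons, mul_sprod]⟩
    · rintro ⟨a, m, _ | ⟨_, hsub⟩ | ⟨_, hsub⟩, rfl⟩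
      · exact Or.inr (Or.inl ⟨a, m, hsub, rfl⟩)
      · cases m with
        | nil => exact Or.inl rfl
        | cons b m => exact Or.inr (Or.inr ⟨sprod b m, ⟨b, m, hsub, rfl⟩, mul_sprod ..⟩)

lemma mem_sublistProds_cons_self (b : S) (l : List S) : b ∈ sublistProds (b :: l) :=
  Finset.mem_insert_self _ _

lemma sublistProds_subset_cons (b : S) (l : List S) : sublistProds l ⊆ sublistProds (b :: l) :=
  fun _ hs => Finset.mem_insert_of_mem (Finset.mem_union_left _ hs)

lemma mul_mem_sublistProds_cons {y : S} {l : List S} (hy : y ∈ sublistProds l) (b : S) :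
    b * y ∈ sublistProds (b :: l) :=
  Finset.mem_insert_of_mem (Finset.mem_union_right _ (Finset.mem_image_of_mem _ hy))

lemma exists_pair_sublist_of_mem_sublistProds {c : S} {l : List S} (hc : c ∉ l)
    (hcl : c ∈ sublistProds l) : ∃ a b, [a, b].Sublist l := by
  obtain ⟨a, m, hsub, hprod⟩ := mem_sublistProds.1 hcl
  cases m with
  | nil =>
    have hac : a = c := hprod
    exact absurd (hsub.subset List.mem_cons_self) (hac ▸ hc)
  | cons b m => exact ⟨a, b, (((List.nil_sublist m).cons_cons b).cons_cons a).trans hsub⟩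

lemma mem_sublistProds_of_mem {b : S} {l : List S} (hb : b ∈ l) : b ∈ sublistProds l :=
  mem_sublistProds.2 ⟨b, [], List.singleton_sublist.2 hb, rfl⟩

end SublistProducts

structure IsMaxIdemProductFree (T : List S) : Prop where
  finite : {x : S | x * x ≠ x}.Finite
  length_eq : T.length = {x : S | x * x ≠ x}.ncard
  piSet_inter : PiSet T ∩ {e : S | e * e = e} = ∅

namespace IsMaxIdemProductFree

variable {T : List S} (hT : IsMaxIdemProductFree T)
include hT

lemma not_isIdempotentElem_of_mem_piSet {s : S} (hs : s ∈ PiSet T) : ¬IsIdempotentElem s :=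
  fun hidem => (Set.eq_empty_iff_forall_notMem.1 hT.piSet_inter) s ⟨hs, hidem⟩

lemma card_toFinset : hT.finite.toFinset.card = T.length := by
  rw [hT.length_eq, Set.ncard_eq_toFinset_card _ hT.finite]

variable [DecidableEq S]

lemma not_isIdempotentElem {l : List S} (hl : l.Subperm T) {s : S} (hs : s ∈ sublistProds l) :
    ¬IsIdempotentElem s :=
  hT.not_isIdempotentElem_of_mem_piSet (aSet_subset_piSet hl (mem_sublistProds.1 hs))

lemma sublistProds_subset_toFinset {l : List S} (hl : l.Subperm T) :
    sublistProds l ⊆ hT.finite.toFinset :=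
  fun _ hs => hT.finite.mem_toFinset.2 (hT.not_isIdempotentElem hl hs)

lemma card_sublistProds_lt_cons {b : S} {l : List S} (hl : (b :: l).Subperm T) :
    (sublistProds l).card < (sublistProds (b :: l)).card := by
  refine Finset.card_lt_card (Finset.ssubset_iff_subset_ne.2
    ⟨sublistProds_subset_cons b l, fun heq => ?_⟩)
  have hlT : l.Subperm T := (List.sublist_cons_self b l).subperm.trans hl
  obtain ⟨z, hz, hbz⟩ := exists_mul_notMem (fun y hy => hT.not_isIdempotentElem hlT hy)
    (heq ▸ mem_sublistProds_cons_self b l)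
  exact hbz (heq ▸ mul_mem_sublistProds_cons hz b)

lemma length_le_card_sublistProds {l : List S} (hl : l.Subperm T) :
    l.length ≤ (sublistProds l).card := by
  induction l with
  | nil => simp
  | cons b l ih =>
    have := hT.card_sublistProds_lt_cons hl
    have := ih ((List.sublist_cons_self b l).subperm.trans hl)
    simp only [List.length_cons]
    omega

lemma card_sublistProds {l : List S} (hl : l.Subperm T) : (sublistProds l).card = l.length := by
  refine le_antisymm ?_ (hT.length_le_card_sublistProds hl)
  refine List.Subperm.induction_down (P := fun l => (sublistProds l).card ≤ l.length)
    (fun l hl => ?_) (fun b l hbl ih => ?_) hl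
  · rw [hl.length_eq, ← hT.card_toFinset]
    exact Finset.card_le_card (hT.sublistProds_subset_toFinset hl.subperm)
  · have := hT.card_sublistProds_lt_cons hbl
    simp only [List.length_cons] at ih
    omega

lemma sublistProds_eq_toFinset {l : List S} (hl : l.Perm T) :
    sublistProds l = hT.finite.toFinset :=
  Finset.eq_of_subset_of_card_le (hT.sublistProds_subset_toFinset hl.subperm) <| by
    rw [hT.card_toFinset, hT.card_sublistProds hl.subperm, hl.length_eq]

lemma sublistProds_eq_erase {b z : S} {l : List S} (hl : (b :: l).Subperm T)
    (hz : z ∈ sublistProds (b :: l)) (hz' : z ∉ sublistProds l) :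
    sublistProds l = (sublistProds (b :: l)).erase z := by
  have hlT : l.Subperm T := (List.sublist_cons_self b l).subperm.trans hl
  refine Finset.eq_of_subset_of_card_le (fun s hs => Finset.mem_erase.2
    ⟨fun h => hz' (h ▸ hs), sublistProds_subset_cons b l hs⟩) ?_
  rw [Finset.card_erase_of_mem hz, hT.card_sublistProds hl, hT.card_sublistProds hlT,
    List.length_cons, Nat.add_sub_cancel]

/- Downward induction: if `b :: l` still fits into `T`, pick `z ∈ A(b :: l)` with
`b * z ∉ A(b :: l)`; then `z` is the one element of `A(b :: l)` missing from both `A(l)` and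
`A(l')`. -/
lemma sublistProds_perm {l l' : List S} (hl : l.Subperm T) (hp : l.Perm l') :
    sublistProds l = sublistProds l' := by
  refine List.Subperm.induction_down
    (P := fun l => ∀ l', l.Perm l' → sublistProds l = sublistProds l')
    (fun l hl l' hp => ?_) (fun b l hbl ih l' hp => ?_) hl l' hp
  · rw [hT.sublistProds_eq_toFinset hl, hT.sublistProds_eq_toFinset (hp.symm.trans hl)]
  · have hbl' : (b :: l').Subperm T := (hp.cons b).symm.subperm.trans hbl
    have hcons := ih (b :: l') (hp.cons b)
    obtain ⟨z, hz, hbz⟩ := exists_mul_notMem (fun y hy => hT.not_isIdempotentElem hbl hy)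
      (mem_sublistProds_cons_self b l)
    have hzl : z ∉ sublistProds l := fun h => hbz (mul_mem_sublistProds_cons h b)
    have hzl' : z ∉ sublistProds l' := fun h => hbz (hcons ▸ mul_mem_sublistProds_cons h b)
    rw [hT.sublistProds_eq_erase hbl hz hzl, hT.sublistProds_eq_erase hbl' (hcons ▸ hz) hzl',
      hcons]

lemma eq_of_notMem_sublistProds_erase {R : List S} {b z w : S} (hR : R.Subperm T) (hb : b ∈ R)
    (hz : z ∈ sublistProds R) (hz' : z ∉ sublistProds (R.erase b))
    (hw : w ∈ sublistProds R) (hw' : w ∉ sublistProds (R.erase b)) : z = w := by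
  have hperm := List.perm_cons_erase hb
  have hbR : (b :: R.erase b).Subperm T := hperm.symm.subperm.trans hR
  rw [hT.sublistProds_perm hR hperm] at hz hw
  exact Finset.erase_injOn _ hz hw
    ((hT.sublistProds_eq_erase hbR hz hz').symm.trans (hT.sublistProds_eq_erase hbR hw hw'))

lemma mul_mem_sublistProds_of_mem_erase {R : List S} {b y : S} (hR : R.Subperm T) (hb : b ∈ R)
    (hy : y ∈ sublistProds (R.erase b)) : b * y ∈ sublistProds R := by
  rw [hT.sublistProds_perm hR (List.perm_cons_erase hb)]
  exact mul_mem_sublistProds_cons hy b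

lemma mul_mem_sublistProds_cons_of_mem {R : List S} {c y : S} (hcR : (c :: R).Subperm T)
    (hy : y ∈ sublistProds R) : y * c ∈ sublistProds (c :: R) := by
  have hperm : (R ++ [c]).Perm (c :: R) := List.perm_append_singleton c R
  rw [← hT.sublistProds_perm (hperm.subperm.trans hcR) hperm, mem_sublistProds]
  exact mul_mem_aSet_append (mem_sublistProds.1 hy) c

section

variable {R : List S} {c : S} (hR : R.Subperm T)
  (hIH : ∀ b ∈ R, ∀ j, pow1 c j ∉ sublistProds (R.erase b))
include hR hIH

lemma pow1_eq_of_mem_sublistProds {i j : ℕ} (hi : pow1 c i ∈ sublistProds R)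
    (hj : pow1 c j ∈ sublistProds R) : pow1 c i = pow1 c j := by
  obtain ⟨b, hb⟩ : ∃ b, b ∈ R :=
    List.exists_mem_of_ne_nil _ (by rintro rfl; simp [sublistProds] at hi)
  exact hT.eq_of_notMem_sublistProds_erase hR hb hi (hIH b hb i) hj (hIH b hb j)

lemma mul_pow1_notMem_sublistProds {b : S} (hb : b ∈ R) {k : ℕ}
    (hk : pow1 c k ∈ sublistProds R) : b * pow1 c k ∉ sublistProds R := by
  obtain ⟨z, hz, hbz⟩ := exists_mul_notMem (fun y hy => hT.not_isIdempotentElem hR hy)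
    (mem_sublistProds_of_mem hb)
  have hz' : z ∉ sublistProds (R.erase b) :=
    fun h => hbz (hT.mul_mem_sublistProds_of_mem_erase hR hb h)
  rwa [← hT.eq_of_notMem_sublistProds_erase hR hb hz hz' hk (hIH b hb k)]

end

/- All powers of `c` in `A(R)` equal `pow1 c k`, and `A(c :: R)` has exactly one element outside
`A(R)`, namely `pow1 c (k + 1)`. Comparing `c`, and in case `c ∈ A(R)` also `b * c` for `b ∈ R` and
`c * c * c`, with these two facts makes `pow1 c k` or `c * c` idempotent. -/
lemma pow1_notMem_sublistProds_of_erase {R : List S} {c : S} (hc : c ∉ R)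
    (hcR : (c :: R).Subperm T) (hIH : ∀ b ∈ R, ∀ j, pow1 c j ∉ sublistProds (R.erase b))
    (k : ℕ) : pow1 c k ∉ sublistProds R := by
  intro hk
  have hR : R.Subperm T := (List.sublist_cons_self c R).subperm.trans hcR
  have hnew : ∀ {z w}, z ∈ sublistProds (c :: R) → z ∉ sublistProds R →
      w ∈ sublistProds (c :: R) → w ∉ sublistProds R → z = w := fun hz hz' hw hw' =>
    hT.eq_of_notMem_sublistProds_erase hcR List.mem_cons_self hz (by rwa [List.erase_cons_head])
      hw (by rwa [List.erase_cons_head])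
  have hidem : ∀ {y}, y ∈ sublistProds (c :: R) → ¬IsIdempotentElem y :=
    hT.not_isIdempotentElem hcR
  have huniq : ∀ {j}, pow1 c j ∈ sublistProds R → pow1 c j = pow1 c k :=
    fun hj => hT.pow1_eq_of_mem_sublistProds hR hIH hj hk
  have hk1 : pow1 c (k + 1) ∈ sublistProds (c :: R) := hT.mul_mem_sublistProds_cons_of_mem hcR hk
  have hk1' : pow1 c (k + 1) ∉ sublistProds R := fun h => hidem (sublistProds_subset_cons c R hk)
    (isIdempotentElem_pow1_of_eq (huniq h) le_rfl (one_dvd _))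
  by_cases hcA : c ∈ sublistProds R
  · have hck : c = pow1 c k := huniq (j := 0) hcA
    have hcc : c * c = pow1 c (k + 1) := by rw [pow1_succ, ← hck]
    obtain ⟨a, b, hab⟩ := exists_pair_sublist_of_mem_sublistProds hc hcA
    have hmulc : ∀ b ∈ R, b * c = c * c := fun b hb => by
      have hbc := hT.mul_pow1_notMem_sublistProds hR hIH hb hk
      rw [← hck] at hbc
      rw [hcc]
      exact hnew (hT.mul_mem_sublistProds_cons_of_mem hcR (mem_sublistProds_of_mem hb)) hbc hk1 hk1'
    have habc : a * b * c ∈ sublistProds (c :: R) :=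
      hT.mul_mem_sublistProds_cons_of_mem hcR (mem_sublistProds.2 ⟨a, [b], hab, rfl⟩)
    rw [mul_assoc, hmulc b (hab.subset (by simp)), ← mul_assoc, hmulc a (hab.subset (by simp))]
      at habc
    refine hidem hk1 ?_
    rw [← hcc]
    by_cases hccc : c * c * c ∈ sublistProds R
    · have : c * c * c = c := (huniq (j := 2) hccc).trans hck.symm
      rw [IsIdempotentElem, ← mul_assoc, this]
    · have : c * c * c = c * c := hnew habc hccc (hcc ▸ hk1) (hcc ▸ hk1')
      rw [IsIdempotentElem, ← mul_assoc, this, this]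
  · have hc1 : pow1 c (0 + (k + 1)) = pow1 c 0 := by
      rw [zero_add]; exact (hnew (mem_sublistProds_cons_self c R) hcA hk1 hk1').symm
    exact hT.not_isIdempotentElem hR hk (isIdempotentElem_pow1_of_eq hc1 (Nat.zero_le k) dvd_rfl)

theorem pow1_notMem_sublistProds {R : List S} {c : S} (hc : c ∉ R) (hcR : (c :: R).Subperm T)
    (k : ℕ) : pow1 c k ∉ sublistProds R := by
  induction hn : R.length using Nat.strong_induction_on generalizing R k with
  | _ n ih =>
    refine hT.pow1_notMem_sublistProds_of_erase hc hcR (fun b hb j => ?_) k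
    have hlt : (R.erase b).length < n := by
      rw [List.length_erase_of_mem hb, ← hn]
      exact Nat.sub_lt (List.length_pos_of_mem hb) one_pos
    exact ih _ hlt (fun h => hc (List.mem_of_mem_erase h))
      ((List.erase_sublist.cons_cons c).subperm.trans hcR) j rfl

lemma count_le_of_isIdempotentElem {a : S} {n : ℕ} (h : IsIdempotentElem (pow1 a n)) :
    T.count a ≤ n := by
  by_contra! hlt
  have hsub : (a :: List.replicate n a).Sublist T := by
    rw [← List.replicate_succ]
    exact List.replicate_sublist_iff.2 hlt
  exact hT.not_isIdempotentElem_of_mem_piSet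
    (aSet_subset_piSet (List.Subperm.refl T) ⟨a, _, hsub, sprod_replicate a n⟩) h

lemma index_add_period_le_count {a : S} {r p : ℕ} (ha : a ∈ T)
    (hx : HasIndexPeriod a (r + 1) p) : r + p ≤ T.count a + 1 := by
  set R := T.filter (· ≠ a)
  have haR : a ∉ R := by simp [R]
  have hR : R.Subperm T := List.filter_sublist.subperm
  have hRlen : R.length + T.count a = T.length := by
    rw [List.count_eq_countP, ← List.countP_eq_length_filter,
      List.length_eq_countP_add_countP (· ≠ a)]
    simp only [ne_eq, decide_not, Bool.not_eq_eq_eq_not, Bool.not_true, decide_eq_false_iff_not,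
      Decidable.not_not, Nat.add_left_cancel_iff]
    rfl
  obtain ⟨m, -, hm⟩ := hx.exists_lt_isIdempotentElem
  set P := (Finset.range (r + p)).image (pow1 a)
  have hP : P.card = r + p := (Finset.card_image_of_injOn fun i hi j hj =>
    hx.injOn (by simpa using hi) (by simpa using hj)).trans (Finset.card_range _)
  have hsub : P.erase (pow1 a m) ⊆ hT.finite.toFinset \ sublistProds R := by
    intro s hs
    obtain ⟨hne, hsP⟩ := Finset.mem_erase.1 hs
    obtain ⟨i, -, rfl⟩ := Finset.mem_image.1 hsP
    exact Finset.mem_sdiff.2 ⟨hT.finite.mem_toFinset.2 fun hi =>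
      hne (pow1_eq_of_isIdempotentElem hi hm),
      hT.pow1_notMem_sublistProds haR (List.cons_subperm_of_not_mem_of_mem haR ha hR) i⟩
  have hcard := (Finset.pred_card_le_card_erase (s := P) (a := pow1 a m)).trans
    (Finset.card_le_card hsub)
  rw [hP, Finset.card_sdiff_of_subset (hT.sublistProds_subset_toFinset hR), hT.card_toFinset,
    hT.card_sublistProds hR] at hcard
  omega

end IsMaxIdemProductFree

end

theorem stmt_10_general {S : Type*} [Semigroup S] [DecidableEq S]
    (hfin : {x : S | x * x ≠ x}.Finite)
    (T : List S) (hlen : T.length = {x : S | x * x ≠ x}.ncard)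
    (hfree : PiSet T ∩ {e : S | e * e = e} = ∅) :
    ∀ a ∈ T, (Set.range (pow1 a)).Finite ∧
      ∃ r p : ℕ, HasIndexPeriod a r p ∧ T.count a = r + p - 2 ∧ r ≡ 1 [MOD p] := by
  intro a ha
  have hT : IsMaxIdemProductFree T := ⟨hfin, hlen, hfree⟩
  have hrange := finite_range_pow1 hfin a
  obtain ⟨i, d, hd, hid⟩ := exists_pow1_eq_of_finite hrange
  obtain ⟨r, p, hx⟩ := exists_hasIndexPeriod hd hid
  obtain ⟨m, hm, hidem⟩ := hx.exists_lt_isIdempotentElem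
  have hlower := hT.index_add_period_le_count ha hx
  have hupper := hT.count_le_of_isIdempotentElem hidem
  have hdvd : p ∣ r + p := by
    rw [show r + p = m + 1 by omega]
    exact hx.dvd_succ_of_isIdempotentElem hidem
  refine ⟨hrange, r + 1, p, hx, by omega, ?_⟩
  have hr : r ≡ 0 [MOD p] := Nat.modEq_zero_iff_dvd.2 ((Nat.dvd_add_left (dvd_refl p)).1 hdvd)
  simpa using hr.add_right 1

/-- For an idempotent-product free sequence `T` of maximal length `|S \ E(S)|`
and each `a ∈ supp(T)`: `⟨a⟩` is finite, `v_a(T) = I(a) + P(a) - 2`, and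
`I(a) ≡ 1 (mod P(a))`. -/
theorem stmt_10 {S : Type*} [Semigroup S] [Nonempty S] [DecidableEq S]
    (hfin : {x : S | x * x ≠ x}.Finite)
    (T : List S) (hlen : T.length = {x : S | x * x ≠ x}.ncard)
    (hfree : PiSet T ∩ {e : S | e * e = e} = ∅) :
    ∀ a ∈ T, (Set.range (pow1 a)).Finite ∧
      ∃ r p : ℕ, HasIndexPeriod a r p ∧ T.count a = r + p - 2 ∧ r ≡ 1 [MOD p] :=
  stmt_10_general hfin T hlen hfree
end
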